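/- Let F be a probability distribution on ℝ ∪ {−∞} whose essential supremum equals 1, i.e., F([1−ε,1]) > 0 for all ε > 0 and F((1,∞)) = 0, and let (w_{i,j}, 0 ≤ i < j) be i.i.d. random variables with law F. Then the almost sure limit C(F) := lim_{n→∞} W_n/n is strictly positive. -/

import Mathlib

/-!
Greedy paths. From each vertex `u` jump along the first edge `(u, u + 1 + N_u)` of charge at
least `1/2`; such edges exist a.s. since `F([1/2, 1]) > 0`, and `P(N_u ≥ m) = r^m` with
`r = F([-∞, 1/2)) < 1`. After `j` jumps the path has charge at least `j/2` and ends at a vertex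
`v_j ≤ L j + ∑_{u < v_j} (N_u + 1 - L)⁺`. The sum runs over all vertices below `v_j`, visited or
not, so its summands are i.i.d. (they depend on disjoint rows of the weight array) and the strong
law applies with no stopping-time argument; for `L` large their mean is below `1/2`. Hence
eventually `v_j ≤ 2 L j`, so `W_{v_j} / v_j ≥ 1 / (4 L)` and `C ≥ 1 / (4 L) > 0`.
-/

open MeasureTheory ProbabilityTheory Filter

noncomputable section

/-- Charge of a path (a list of vertices): sum of the edge charges, with the
convention `⊥ + x = ⊥` (built into `EReal` addition, values in `ℝ ∪ {-∞}` never meet `⊤`).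
A single-vertex path has charge `0`. -/
def pathCharge (w : ℕ → ℕ → EReal) : List ℕ → EReal
  | [] => 0
  | [_] => 0
  | i :: j :: rest => w i j + pathCharge w (j :: rest)

/-- `π` is a path from `i` to `j`: a finite strictly increasing list of vertices
starting at `i` and ending at `j`. -/
def IsPath (i j : ℕ) (π : List ℕ) : Prop :=
  π.Chain' (· < ·) ∧ π.head? = some i ∧ π.getLast? = some j

/-- `W_{i,j}`: the maximal charge over all paths from `i` to `j`. -/
def maxCharge (w : ℕ → ℕ → EReal) (i j : ℕ) : EReal :=
  sSup (pathCharge w '' {π | IsPath i j π})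

open scoped ENNReal

section Paths

variable (w : ℕ → ℕ → EReal)

lemma IsPath.cons {i j k : ℕ} {π : List ℕ} (h : IsPath j k π) (hij : i < j) :
    IsPath i k (i :: π) := by
  obtain ⟨hchain, hhead, hlast⟩ := h
  obtain ⟨rest, rfl⟩ : ∃ rest, π = j :: rest := by
    cases π with
    | nil => simp at hhead
    | cons a rest => exact ⟨rest, by simp_all⟩
  exact ⟨List.IsChain.cons_cons hij hchain, rfl, by simpa using hlast⟩

lemma pathCharge_cons {i j : ℕ} {π : List ℕ} (h : π.head? = some j) :
    pathCharge w (i :: π) = w i j + pathCharge w π := by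
  cases π with
  | nil => simp at h
  | cons a rest => simp only [List.head?_cons, Option.some.injEq] at h; subst h; rfl

lemma le_maxCharge {i j : ℕ} {π : List ℕ} (h : IsPath i j π) :
    pathCharge w π ≤ maxCharge w i j :=
  le_sSup ⟨π, h, rfl⟩

lemma exists_isPath_iterate (nxt : ℕ → ℕ) (hlt : ∀ u, u < nxt u) (c : ℝ)
    (hc : ∀ u, (c : EReal) ≤ w u (nxt u)) (j u : ℕ) :
    ∃ π, IsPath u (nxt^[j] u) π ∧ ((j * c : ℝ) : EReal) ≤ pathCharge w π := by
  induction j generalizing u with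
  | zero => exact ⟨[u], ⟨List.isChain_singleton u, rfl, rfl⟩, by simp [pathCharge]⟩
  | succ j ih =>
    obtain ⟨π, hπ, hcharge⟩ := ih (nxt u)
    refine ⟨u :: π, hπ.cons (hlt u), ?_⟩
    rw [pathCharge_cons w hπ.2.1, Nat.cast_succ, add_mul, one_mul, add_comm, EReal.coe_add]
    exact add_le_add (hc u) hcharge

lemma mul_le_maxCharge_iterate (nxt : ℕ → ℕ) (hlt : ∀ u, u < nxt u) (c : ℝ)
    (hc : ∀ u, (c : EReal) ≤ w u (nxt u)) (j u : ℕ) :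
    ((j * c : ℝ) : EReal) ≤ maxCharge w u (nxt^[j] u) :=
  let ⟨_, hπ, hcharge⟩ := exists_isPath_iterate w nxt hlt c hc j u
  hcharge.trans (le_maxCharge w hπ)

end Paths

section Growth

variable (nxt e : ℕ → ℕ) (L : ℕ)

lemma iterate_le_mul_add_sum (hlt : ∀ u, u < nxt u) (hle : ∀ u, nxt u ≤ u + L + e u) (j : ℕ) :
    nxt^[j] 0 ≤ L * j + ∑ u ∈ Finset.range (nxt^[j] 0), e u := by
  induction j with
  | zero => simp
  | succ j ih =>
    set v := nxt^[j] 0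
    have hsum : ∑ u ∈ Finset.range (v + 1), e u ≤ ∑ u ∈ Finset.range (nxt v), e u :=
      Finset.sum_le_sum_of_subset (Finset.range_subset_range.2 (hlt v))
    rw [Finset.sum_range_succ] at hsum
    rw [Function.iterate_succ_apply', Nat.mul_succ]
    linarith [hle v]

lemma le_iterate (hlt : ∀ u, u < nxt u) (j : ℕ) : j ≤ nxt^[j] 0 := by
  induction j with
  | zero => exact le_rfl
  | succ j ih => rw [Function.iterate_succ_apply']; exact Nat.succ_le_of_lt (ih.trans_lt (hlt _))

lemma eventually_iterate_le (hlt : ∀ u, u < nxt u) (hle : ∀ u, nxt u ≤ u + L + e u)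
    (hsum : ∀ᶠ n in atTop, (∑ u ∈ Finset.range n, (e u : ℝ)) ≤ n / 2) :
    ∀ᶠ j in atTop, (nxt^[j] 0 : ℝ) ≤ 2 * L * j := by
  have htend : Tendsto (fun j => nxt^[j] 0) atTop atTop :=
    tendsto_atTop_mono (le_iterate nxt hlt) tendsto_id
  filter_upwards [htend.eventually hsum] with j hj
  have h := iterate_le_mul_add_sum nxt e L hlt hle j
  have h' : (nxt^[j] 0 : ℝ) ≤ L * j + ∑ u ∈ Finset.range (nxt^[j] 0), (e u : ℝ) := by
    exact_mod_cast h
  linarith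

end Growth

lemma le_of_tendsto_inv_mul_maxCharge (w : ℕ → ℕ → EReal) (nxt : ℕ → ℕ) (hlt : ∀ u, u < nxt u)
    {c : ℝ} (hc0 : 0 ≤ c) (hc : ∀ u, (c : EReal) ≤ w u (nxt u)) {K : ℝ}
    (hgrow : ∀ᶠ j in atTop, (nxt^[j] 0 : ℝ) ≤ K * j) {C : EReal}
    (hC : Tendsto (fun n : ℕ => (((n : ℝ)⁻¹ : ℝ) : EReal) * maxCharge w 0 n) atTop (nhds C)) :
    ((c / K : ℝ) : EReal) ≤ C := by
  have hmono : StrictMono (fun j => nxt^[j] 0) :=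
    strictMono_nat_of_lt_succ fun j => by rw [Function.iterate_succ_apply']; exact hlt _
  refine ge_of_tendsto (hC.comp hmono.tendsto_atTop) ?_
  filter_upwards [hgrow, eventually_ge_atTop 1] with j hj hj1
  have hv : (0 : ℝ) < nxt^[j] 0 := by exact_mod_cast hj1.trans (le_iterate nxt hlt j)
  have hjc : 0 ≤ (j : ℝ) * c := by positivity
  calc ((c / K : ℝ) : EReal) ≤ (((nxt^[j] 0 : ℝ)⁻¹ * (j * c) : ℝ) : EReal) := by
        have hj0 : (0 : ℝ) < j := by exact_mod_cast hj1
        have hK : 0 < K := pos_of_mul_pos_left (hv.trans_le hj) hj0.le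
        rw [EReal.coe_le_coe_iff, inv_mul_eq_div]
        calc c / K = j * c / (K * j) := by field_simp
          _ ≤ j * c / (nxt^[j] 0) := div_le_div_of_nonneg_left hjc hv hj
    _ ≤ _ := by
        rw [EReal.coe_mul]
        exact mul_le_mul_of_nonneg_left (mul_le_maxCharge_iterate w nxt hlt c hc j 0)
          (EReal.coe_nonneg.2 (inv_nonneg.2 hv.le))

section FirstGe

variable {α : Type*} [LinearOrder α] (a : α)

lemma exists_le_or_forall_lt (x : ℕ → α) : ∃ n, a ≤ x n ∨ ∀ k, x k < a := by
  by_cases h : ∃ n, a ≤ x n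
  · exact h.imp fun _ => Or.inl
  · simp only [not_exists, not_le] at h
    exact ⟨0, Or.inr h⟩

open Classical in
/-- The first index `n` with `a ≤ x n`, and `0` if there is none. -/
def firstGe (x : ℕ → α) : ℕ := Nat.find (exists_le_or_forall_lt a x)

variable {a}

lemma le_apply_firstGe {x : ℕ → α} (h : ∃ k, a ≤ x k) : a ≤ x (firstGe a x) := by
  classical
  obtain ⟨k, hk⟩ := h
  exact (Nat.find_spec (exists_le_or_forall_lt a x)).resolve_right fun hall => (hall k).not_ge hk

lemma lt_of_lt_firstGe {x : ℕ → α} {k : ℕ} (hk : k < firstGe a x) : x k < a := by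
  classical
  exact not_le.1 (not_or.1 (Nat.find_min (exists_le_or_forall_lt a x) hk)).1

variable (a) [TopologicalSpace α] [OrderClosedTopology α] [MeasurableSpace α]
  [OpensMeasurableSpace α]

lemma measurable_firstGe : Measurable (firstGe a : (ℕ → α) → ℕ) := by
  classical
  have hnone : MeasurableSet {x : ℕ → α | ∀ k, x k < a} := by
    rw [Set.ofPred_forall]
    exact .iInter fun k => measurable_pi_apply k measurableSet_Iio
  exact measurable_find _ fun n => (measurable_pi_apply n measurableSet_Ici).union hnone

lemma measurable_firstGe_add_one_sub (L : ℕ) :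
    Measurable fun x : ℕ → α => firstGe a x + 1 - L :=
  (measurable_from_nat (f := fun n => n + 1 - L)).comp (measurable_firstGe a)

end FirstGe

lemma lintegral_natCast_eq_tsum {β : Type*} [MeasurableSpace β] (ν : Measure β) {f : β → ℕ}
    (hf : Measurable f) : ∫⁻ x, (f x : ℝ≥0∞) ∂ν = ∑' t : ℕ, ν {x | t < f x} := by
  have hset : ∀ t : ℕ, MeasurableSet {x | t < f x} := fun t => hf measurableSet_Ioi
  have hsum : ∀ x, (f x : ℝ≥0∞) = ∑' t : ℕ, {y | t < f y}.indicator (fun _ => 1) x := by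
    intro x
    rw [tsum_eq_sum (s := Finset.range (f x))
      fun t ht => Set.indicator_of_notMem (by simpa using ht) _,
      Finset.sum_congr rfl fun t ht => Set.indicator_of_mem (by simpa using ht) _]
    simp
  simp_rw [hsum]
  rw [lintegral_tsum fun t => (measurable_const.indicator (hset t)).aemeasurable]
  exact tsum_congr fun t => lintegral_indicator_one (hset t)

section ProductMeasure

variable {α : Type*} [LinearOrder α] [TopologicalSpace α] [OrderClosedTopology α]
  [MeasurableSpace α] [OpensMeasurableSpace α] (a : α) (ν : Measure α) [IsProbabilityMeasure ν]

lemma infinitePi_forall_lt (m : ℕ) :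
    Measure.infinitePi (fun _ : ℕ => ν) {x | ∀ k < m, x k < a} = ν (Set.Iio a) ^ m := by
  have : {x : ℕ → α | ∀ k < m, x k < a} = (Finset.range m : Set ℕ).pi fun _ => Set.Iio a := by
    ext; simp
  rw [this, Measure.infinitePi_pi _ fun _ _ => measurableSet_Iio, Finset.prod_const,
    Finset.card_range]

lemma ae_infinitePi_exists_le (hr : ν (Set.Iio a) < 1) :
    ∀ᵐ x ∂Measure.infinitePi (fun _ : ℕ => ν), ∃ k, a ≤ x k := by
  have hnull : Measure.infinitePi (fun _ : ℕ => ν) {x | ∀ k, x k < a} = 0 :=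
    le_zero_iff.1 <| ge_of_tendsto' (ENNReal.tendsto_pow_atTop_nhds_zero_of_lt_one hr) fun m =>
      (measure_mono (s := {x : ℕ → α | ∀ k, x k < a}) (t := {x | ∀ k < m, x k < a})
        fun x hx k _ => hx k).trans_eq (infinitePi_forall_lt a ν m)
  rw [ae_iff]
  simpa only [not_exists, not_le] using hnull

lemma lintegral_firstGe_sub_le (L : ℕ) :
    ∫⁻ x, ((firstGe a x + 1 - L : ℕ) : ℝ≥0∞) ∂Measure.infinitePi (fun _ : ℕ => ν)
      ≤ ν (Set.Iio a) ^ L * (1 - ν (Set.Iio a))⁻¹ := by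
  set r := ν (Set.Iio a)
  have htail : ∀ t : ℕ, {x : ℕ → α | t < firstGe a x + 1 - L} ⊆ {x | ∀ k < L + t, x k < a} :=
    fun t x hx k hk => lt_of_lt_firstGe (by simp only [Set.mem_ofPred_eq] at hx; omega)
  rw [lintegral_natCast_eq_tsum _ (measurable_firstGe_add_one_sub a L)]
  calc ∑' t : ℕ, Measure.infinitePi (fun _ : ℕ => ν) {x | t < firstGe a x + 1 - L}
      ≤ ∑' t : ℕ, r ^ (L + t) := ENNReal.tsum_le_tsum fun t =>
        (measure_mono (htail t)).trans_eq (infinitePi_forall_lt a ν _)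
    _ = r ^ L * (1 - r)⁻¹ := by
        simp_rw [pow_add]
        rw [ENNReal.tsum_mul_left, ENNReal.tsum_geometric]

end ProductMeasure

section Rows

variable {Ω β : Type*} [MeasurableSpace Ω] [MeasurableSpace β] {μ : Measure Ω}
  {X : ℕ × ℕ → Ω → β}

def row (X : ℕ × ℕ → Ω → β) (v : ℕ) (ω : Ω) (k : ℕ) : β := X (v, v + 1 + k) ω

lemma measurable_row (hmeas : ∀ p, Measurable (X p)) (v : ℕ) : Measurable (row X v) :=
  measurable_pi_lambda _ fun _ => hmeas _

lemma map_row (hmeas : ∀ p, Measurable (X p)) (hindep : iIndepFun X μ) {F : Measure β}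
    [IsProbabilityMeasure F] (hlaw : ∀ p, μ.map (X p) = F) (v : ℕ) :
    μ.map (row X v) = Measure.infinitePi fun _ : ℕ => F := by
  have hinj : Function.Injective fun k : ℕ => ((v, v + 1 + k) : ℕ × ℕ) :=
    fun k l h => by simp only [Prod.mk.injEq] at h; omega
  change μ.map (fun ω k => X (v, v + 1 + k) ω) = _
  rw [(hindep.precomp hinj).map_fun_eq_infinitePi_map fun _ => hmeas _]
  simp only [hlaw]

lemma indepFun_row (hmeas : ∀ p, Measurable (X p)) (hindep : iIndepFun X μ) {u v : ℕ}
    (huv : u ≠ v) : IndepFun (row X u) (row X v) μ := by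
  let M : Set (ℕ × ℕ) → MeasurableSpace Ω := fun S =>
    ⨆ p ∈ S, MeasurableSpace.comap (X p) inferInstance
  have hrow : ∀ u, MeasurableSpace.comap (row X u) inferInstance ≤ M {p | p.1 = u} := fun u =>
    Measurable.comap_le <| @measurable_pi_lambda _ _ _ (M _) _ _ fun k =>
      Measurable.of_comap_le <| le_iSup₂ (f := fun p (_ : p ∈ {p : ℕ × ℕ | p.1 = u}) =>
        MeasurableSpace.comap (X p) inferInstance) (u, u + 1 + k) rfl
  have hdisj : Disjoint {p : ℕ × ℕ | p.1 = u} {p | p.1 = v} :=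
    Set.disjoint_left.2 fun p hu hv => huv (hu.symm.trans hv)
  exact indep_of_indep_of_le_left (indep_of_indep_of_le_right
    (indep_iSup_of_disjoint (fun p => (hmeas p).comap_le) hindep hdisj) (hrow v)) (hrow u)

end Rows

section Greedy

variable {Ω α : Type*} [MeasurableSpace Ω] {μ : Measure Ω}
  [LinearOrder α] [TopologicalSpace α] [OrderClosedTopology α] [MeasurableSpace α]
  [OpensMeasurableSpace α] {F : Measure α} [IsProbabilityMeasure F] {X : ℕ × ℕ → Ω → α}

lemma ae_forall_exists_le_row (hmeas : ∀ p, Measurable (X p)) (hindep : iIndepFun X μ)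
    (hlaw : ∀ p, μ.map (X p) = F) {a : α} (hr : F (Set.Iio a) < 1) :
    ∀ᵐ ω ∂μ, ∀ v, ∃ k, a ≤ row X v ω k :=
  ae_all_iff.2 fun v => ae_of_ae_map (measurable_row hmeas v).aemeasurable <| by
    rw [map_row hmeas hindep hlaw]
    exact ae_infinitePi_exists_le a F hr

lemma integrable_firstGe_sub_and_integral_lt (a : α) (L : ℕ)
    (hL : F (Set.Iio a) ^ L * (1 - F (Set.Iio a))⁻¹ < 2⁻¹) :
    Integrable (fun x => ((firstGe a x + 1 - L : ℕ) : ℝ)) (Measure.infinitePi fun _ : ℕ => F) ∧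
      ∫ x, ((firstGe a x + 1 - L : ℕ) : ℝ) ∂Measure.infinitePi (fun _ : ℕ => F) < 2⁻¹ := by
  have hmeas : Measurable fun x : ℕ → α => ((firstGe a x + 1 - L : ℕ) : ℝ) :=
    measurable_from_nat.comp (measurable_firstGe_add_one_sub a L)
  have hlint := (lintegral_firstGe_sub_le a F L).trans_lt hL
  simp_rw [← ENNReal.ofReal_natCast] at hlint
  refine ⟨⟨hmeas.aestronglyMeasurable, ?_⟩, ?_⟩
  · rw [hasFiniteIntegral_iff_ofReal (ae_of_all _ fun _ => Nat.cast_nonneg _)]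
    exact hlint.trans_le le_top
  · rw [integral_eq_lintegral_of_nonneg_ae (ae_of_all _ fun _ => Nat.cast_nonneg _)
      hmeas.aestronglyMeasurable]
    exact (ENNReal.toReal_lt_toReal (hlint.trans (by norm_num)).ne (by norm_num)).2 hlint
      |>.trans_eq (by norm_num)

lemma ae_eventually_sum_firstGe_row_le (hmeas : ∀ p, Measurable (X p)) (hindep : iIndepFun X μ)
    (hlaw : ∀ p, μ.map (X p) = F) (a : α) (L : ℕ)
    (hL : F (Set.Iio a) ^ L * (1 - F (Set.Iio a))⁻¹ < 2⁻¹) :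
    ∀ᵐ ω ∂μ, ∀ᶠ n in atTop,
      ∑ v ∈ Finset.range n, ((firstGe a (row X v ω) + 1 - L : ℕ) : ℝ) ≤ n / 2 := by
  set g : (ℕ → α) → ℝ := fun x => ((firstGe a x + 1 - L : ℕ) : ℝ)
  have hg : Measurable g := measurable_from_nat.comp (measurable_firstGe_add_one_sub a L)
  obtain ⟨hint, hmean⟩ := integrable_firstGe_sub_and_integral_lt a L hL
  have hrow : ∀ v, Measurable (row X v) := measurable_row hmeas
  have hident : ∀ v, IdentDistrib (row X v) (row X 0) μ μ := fun v =>
    ⟨(hrow v).aemeasurable, (hrow 0).aemeasurable, by rw [map_row hmeas hindep hlaw,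
      map_row hmeas hindep hlaw]⟩
  have hslln := strong_law_ae_real (fun v => g ∘ row X v)
    ((integrable_map_measure hg.aestronglyMeasurable (hrow 0).aemeasurable).1
      (by rwa [map_row hmeas hindep hlaw]))
    (fun u v huv => (indepFun_row hmeas hindep huv).comp hg hg)
    (fun v => (hident v).comp hg)
  have hmean' : ∫ ω, g (row X 0 ω) ∂μ < 2⁻¹ := by
    rwa [← integral_map (hrow 0).aemeasurable hg.aestronglyMeasurable, map_row hmeas hindep hlaw]
  filter_upwards [hslln] with ω hω
  filter_upwards [hω.eventually_lt_const hmean', eventually_gt_atTop 0] with n hlt hn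
  rw [div_lt_iff₀ (by exact_mod_cast hn)] at hlt
  simp only [Function.comp_apply, g] at hlt
  linarith

end Greedy

theorem lpp_constant_pos_general
    {Ω : Type} [MeasurableSpace Ω] (μ : Measure Ω) [IsProbabilityMeasure μ]
    (F : Measure EReal) [IsProbabilityMeasure F]
    (X : ℕ × ℕ → Ω → EReal)
    (hmeas : ∀ p, Measurable (X p))
    (hindep : iIndepFun X μ)
    (hlaw : ∀ p, μ.map (X p) = F)
    (hF1 : ∀ ε : ℝ, 0 < ε → 0 < F (Set.Icc ((1 - ε : ℝ) : EReal) 1))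
    (C : EReal)
    (hC : ∀ᵐ ω ∂μ, Filter.Tendsto
      (fun n : ℕ => (((n : ℝ)⁻¹ : ℝ) : EReal) * maxCharge (fun i j => X (i, j) ω) 0 n)
      Filter.atTop (nhds C)) :
    0 < C := by
  set a : EReal := ((2⁻¹ : ℝ) : EReal)
  set r := F (Set.Iio a)
  have hr : r < 1 := by
    have hq : 0 < F (Set.Ici a) := (hF1 2⁻¹ (by norm_num)).trans_le <| measure_mono <| by
      norm_num [a, Set.Icc_subset_Ici_self]
    rw [show r = F (Set.Ici a)ᶜ by rw [Set.compl_Ici], prob_compl_eq_one_sub measurableSet_Ici]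
    exact ENNReal.sub_lt_self ENNReal.one_ne_top one_ne_zero hq.ne'
  obtain ⟨L, hL, hL1⟩ : ∃ L : ℕ, r ^ L * (1 - r)⁻¹ < 2⁻¹ ∧ 1 ≤ L := by
    have h := ENNReal.Tendsto.mul_const (ENNReal.tendsto_pow_atTop_nhds_zero_of_lt_one hr)
      (Or.inr (ENNReal.inv_ne_top.2 (tsub_pos_of_lt hr).ne'))
    rw [zero_mul] at h
    exact ((h.eventually_lt_const (by norm_num)).and (eventually_ge_atTop 1)).exists
  obtain ⟨ω, hCω, hsum, hgood⟩ := (hC.and ((ae_eventually_sum_firstGe_row_le hmeas hindep hlaw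
    a L hL).and (ae_forall_exists_le_row hmeas hindep hlaw hr))).exists
  set nxt : ℕ → ℕ := fun u => u + 1 + firstGe a (row X u ω)
  have hlt : ∀ u, u < nxt u := fun u => by simp only [nxt]; omega
  have hgrow := eventually_iterate_le nxt (fun u => firstGe a (row X u ω) + 1 - L) L
    hlt (fun u => by simp only [nxt]; omega) hsum
  have hC' := le_of_tendsto_inv_mul_maxCharge _ nxt hlt (by norm_num)
    (fun u => le_apply_firstGe (hgood u)) hgrow hCω
  have hL0 : (0 : ℝ) < L := by exact_mod_cast hL1
  exact lt_of_lt_of_le (by exact_mod_cast (by positivity : (0 : ℝ) < 2⁻¹ / (2 * L))) hC'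

/-- if `F` has essential supremum `1` (i.e. `F([1-ε,1]) > 0` for all `ε > 0`
and `F((1,∞)) = 0`), then the a.s. limit `C(F)` of `W_n/n` is strictly positive. -/
theorem lpp_constant_pos
    {Ω : Type} [MeasurableSpace Ω] (μ : Measure Ω) [IsProbabilityMeasure μ]
    (F : Measure EReal) [IsProbabilityMeasure F] (hFtop : F {⊤} = 0)
    (X : ℕ × ℕ → Ω → EReal)
    (hmeas : ∀ p, Measurable (X p))
    (hindep : iIndepFun X μ)
    (hlaw : ∀ p, μ.map (X p) = F)
    (hF1 : ∀ ε : ℝ, 0 < ε → 0 < F (Set.Icc ((1 - ε : ℝ) : EReal) 1))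
    (hF2 : F {x : EReal | 1 < x} = 0)
    (C : EReal)
    (hC : ∀ᵐ ω ∂μ, Filter.Tendsto
      (fun n : ℕ => (((n : ℝ)⁻¹ : ℝ) : EReal) * maxCharge (fun i j => X (i, j) ω) 0 n)
      Filter.atTop (nhds C)) :
    0 < C :=
  lpp_constant_pos_general μ F X hmeas hindep hlaw hF1 C hC
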